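/- Let P ⊂ ℝ² be an open bounded convex polygon with metric d = ∑_i w_i d_{θ_i} as above, where Θ contains the direction of every side of P. Let v be a point in the relative interior of a side of P, x ∈ P, and (y_n) a sequence on the Euclidean segment [x,v] converging to v. Then d(x, y_n) → ∞. -/

import Mathlib

/-- Projection of a point of the plane onto the direction `(cos θ, sin θ)`. -/
noncomputable def projDir (θ : ℝ) (p : ℝ × ℝ) : ℝ := p.1 * Real.cos θ + p.2 * Real.sin θ

/-- Lower bound of the minimal strip containing `P` in direction `θ`. -/
noncomputable def stripXi (θ : ℝ) (P : Set (ℝ × ℝ)) : ℝ := sInf (projDir θ '' P)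

/-- Upper bound of the minimal strip containing `P` in direction `θ`. -/
noncomputable def stripEta (θ : ℝ) (P : Set (ℝ × ℝ)) : ℝ := sSup (projDir θ '' P)

/-- The strip cross-ratio pseudo-metric `d_θ` on `P`. -/
noncomputable def stripD (θ : ℝ) (P : Set (ℝ × ℝ)) (x y : ℝ × ℝ) : ℝ :=
  |Real.log (((projDir θ y - stripXi θ P) * (stripEta θ P - projDir θ x)) /
    ((projDir θ x - stripXi θ P) * (stripEta θ P - projDir θ y)))|

/-!
Let `i` be the index whose direction is normal to the side through `v`. Then `⟨y n, u_i⟩`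
tends to the end `ξ_i` or `η_i` of the strip `ξ_i < ⟨·, u_i⟩ < η_i` containing `P`, so the single
term `w_i d_{θ_i}(x, y n)` tends to infinity, and the sum dominates it because all terms are
nonnegative. The series converges at all because, when `ε`-balls around `p` and `q` lie in `P`,
`d_θ(p, q) ≤ 8 ‖q - p‖ / ε` uniformly in `θ`.
-/

open Filter Topology Set

/-- In this coordinate on `(a, b)` the cross-ratio distance of the interval becomes the
Euclidean distance of `ℝ`. -/
noncomputable def stripCoord (a b t : ℝ) : ℝ := Real.log (t - a) - Real.log (b - t)

lemma log_crossRatio_eq_stripCoord_sub {a b s t : ℝ} (hs : s ∈ Ioo a b) (ht : t ∈ Ioo a b) :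
    Real.log (((t - a) * (b - s)) / ((s - a) * (b - t))) =
      stripCoord a b t - stripCoord a b s := by
  obtain ⟨hs₁, hs₂⟩ := hs
  obtain ⟨ht₁, ht₂⟩ := ht
  rw [Real.log_div (by nlinarith) (by nlinarith), Real.log_mul (by linarith) (by linarith),
    Real.log_mul (by linarith) (by linarith), stripCoord, stripCoord]
  ring

lemma abs_log_sub_log_le {m x y : ℝ} (hm : 0 < m) (hx : m ≤ x) (hy : m ≤ y) :
    |Real.log x - Real.log y| ≤ |x - y| / m := by
  have hx₀ : 0 < x := hm.trans_le hx
  have hy₀ : 0 < y := hm.trans_le hy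
  have h₁ := Real.log_le_sub_one_of_pos (div_pos hx₀ hy₀)
  have h₂ := Real.log_le_sub_one_of_pos (div_pos hy₀ hx₀)
  rw [Real.log_div hx₀.ne' hy₀.ne', div_sub_one hy₀.ne'] at h₁
  rw [Real.log_div hy₀.ne' hx₀.ne', div_sub_one hx₀.ne'] at h₂
  have h₁' : (x - y) / y ≤ |x - y| / m :=
    div_le_div₀ (abs_nonneg _) (le_abs_self _) hm hy
  have h₂' : (y - x) / x ≤ |x - y| / m :=
    div_le_div₀ (abs_nonneg _) (abs_sub_comm x y ▸ le_abs_self _) hm hx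
  rw [abs_le]
  constructor <;> linarith

lemma abs_stripCoord_sub_le {a b m s t : ℝ} (hm : 0 < m) (hs : s ∈ Icc (a + m) (b - m))
    (ht : t ∈ Icc (a + m) (b - m)) :
    |stripCoord a b t - stripCoord a b s| ≤ 2 * |t - s| / m := by
  have h₁ := abs_log_sub_log_le (x := t - a) (y := s - a) hm
    (by linarith [ht.1]) (by linarith [hs.1])
  have h₂ := abs_log_sub_log_le (x := b - s) (y := b - t) hm
    (by linarith [hs.2]) (by linarith [ht.2])
  rw [show b - s - (b - t) = t - s by ring] at h₂
  rw [show t - a - (s - a) = t - s by ring] at h₁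
  calc |stripCoord a b t - stripCoord a b s|
      = |(Real.log (t - a) - Real.log (s - a)) + (Real.log (b - s) - Real.log (b - t))| := by
        rw [stripCoord, stripCoord]; ring_nf
    _ ≤ |t - s| / m + |t - s| / m := (abs_add_le _ _).trans (add_le_add h₁ h₂)
    _ = 2 * |t - s| / m := by ring

lemma tendsto_stripCoord_nhdsGT {a b : ℝ} (hab : a < b) :
    Tendsto (stripCoord a b) (𝓝[>] a) atBot := by
  have hlog : Tendsto (fun t => Real.log (t - a)) (𝓝[>] a) atBot := by
    refine Real.tendsto_log_nhdsGT_zero.comp (tendsto_nhdsWithin_iff.2 ⟨?_, ?_⟩)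
    · simpa using (continuous_sub_right a).continuousAt.tendsto.mono_left
        (nhdsWithin_le_nhds (a := a) (s := Ioi a))
    · exact eventually_nhdsWithin_of_forall fun t ht => mem_Ioi.2 (sub_pos.2 ht)
  have hconst : Tendsto (fun t => -Real.log (b - t)) (𝓝[>] a) (𝓝 (-Real.log (b - a))) :=
    ((tendsto_const_nhds.sub tendsto_id).log (sub_pos.2 hab).ne').neg.mono_left nhdsWithin_le_nhds
  exact (hlog.atBot_add hconst).congr fun t => (sub_eq_add_neg _ _).symm

lemma tendsto_stripCoord_nhdsLT {a b : ℝ} (hab : a < b) :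
    Tendsto (stripCoord a b) (𝓝[<] b) atTop := by
  have hlog : Tendsto (fun t => -Real.log (b - t)) (𝓝[<] b) atTop := by
    refine tendsto_neg_atBot_atTop.comp (Real.tendsto_log_nhdsGT_zero.comp
      (tendsto_nhdsWithin_iff.2 ⟨?_, ?_⟩))
    · simpa using ((continuous_sub_left b).continuousAt (x := b)).tendsto.mono_left
        (nhdsWithin_le_nhds (s := Iio b))
    · exact eventually_nhdsWithin_of_forall fun t ht => mem_Ioi.2 (sub_pos.2 ht)
  have hconst : Tendsto (fun t => Real.log (t - a)) (𝓝[<] b) (𝓝 (Real.log (b - a))) :=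
    ((tendsto_id.sub tendsto_const_nhds).log (sub_pos.2 hab).ne').mono_left nhdsWithin_le_nhds
  exact (hconst.add_atTop hlog).congr fun t => (sub_eq_add_neg _ _).symm

lemma lipschitzWith_projDir (θ : ℝ) : LipschitzWith 2 (projDir θ) := by
  refine LipschitzWith.of_dist_le_mul fun p q => ?_
  have h₁ : |p.1 - q.1| ≤ dist p q := by
    rw [Prod.dist_eq, ← Real.dist_eq]; exact le_max_left _ _
  have h₂ : |p.2 - q.2| ≤ dist p q := by
    rw [Prod.dist_eq, ← Real.dist_eq]; exact le_max_right _ _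
  have hc := Real.abs_cos_le_one θ
  have hs := Real.abs_sin_le_one θ
  calc dist (projDir θ p) (projDir θ q)
      = |(p.1 - q.1) * Real.cos θ + (p.2 - q.2) * Real.sin θ| := by
        rw [Real.dist_eq, projDir, projDir]; ring_nf
    _ ≤ |p.1 - q.1| * |Real.cos θ| + |p.2 - q.2| * |Real.sin θ| := by
        rw [← abs_mul, ← abs_mul]; exact abs_add_le _ _
    _ ≤ dist p q * 1 + dist p q * 1 := by gcongr
    _ = (2 : NNReal) * dist p q := by push_cast; ring

lemma projDir_add_smul (θ c : ℝ) (p : ℝ × ℝ) :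
    projDir θ (p + c • (Real.cos θ, Real.sin θ)) = projDir θ p + c := by
  simp only [projDir, Prod.fst_add, Prod.snd_add, Prod.smul_mk, smul_eq_mul]
  linear_combination c * Real.cos_sq_add_sin_sq θ

lemma projDir_eq_of_mem_segment {θ : ℝ} {A B v : ℝ × ℝ} (hv : v ∈ segment ℝ A B)
    (hAB : projDir θ A = projDir θ B) : projDir θ v = projDir θ A := by
  obtain ⟨a, b, -, -, hab, rfl⟩ := hv
  simp only [projDir, Prod.fst_add, Prod.snd_add, Prod.smul_fst, Prod.smul_snd,
    smul_eq_mul] at hAB ⊢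
  linear_combination (-b) * hAB + (A.1 * Real.cos θ + A.2 * Real.sin θ) * hab

section Strip

variable {P : Set (ℝ × ℝ)} {θ : ℝ}

lemma stripXi_le_projDir (hP : Bornology.IsBounded P) {p : ℝ × ℝ} (hp : p ∈ P) :
    stripXi θ P ≤ projDir θ p :=
  csInf_le ((lipschitzWith_projDir θ).isBounded_image hP).bddBelow (mem_image_of_mem _ hp)

lemma projDir_le_stripEta (hP : Bornology.IsBounded P) {p : ℝ × ℝ} (hp : p ∈ P) :
    projDir θ p ≤ stripEta θ P :=
  le_csSup ((lipschitzWith_projDir θ).isBounded_image hP).bddAbove (mem_image_of_mem _ hp)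

lemma projDir_mem_Icc_of_ball_subset (hP : Bornology.IsBounded P) {p : ℝ × ℝ} {ε : ℝ}
    (hε : 0 < ε) (hball : Metric.ball p ε ⊆ P) :
    projDir θ p ∈ Icc (stripXi θ P + ε / 2) (stripEta θ P - ε / 2) := by
  have hmem : ∀ c : ℝ, |c| < ε → p + c • (Real.cos θ, Real.sin θ) ∈ P := by
    intro c hc
    refine hball (mem_ball_iff_norm.2 ?_)
    rw [add_sub_cancel_left, norm_smul, Real.norm_eq_abs]
    have hu : ‖((Real.cos θ, Real.sin θ) : ℝ × ℝ)‖ ≤ 1 :=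
      max_le (Real.abs_cos_le_one θ) (Real.abs_sin_le_one θ)
    nlinarith [abs_nonneg c]
  have hlo := stripXi_le_projDir (θ := θ) hP (hmem (-(ε / 2)) (by rw [abs_neg, abs_of_pos]
    <;> linarith))
  have hhi := projDir_le_stripEta (θ := θ) hP (hmem (ε / 2) (by rw [abs_of_pos] <;> linarith))
  rw [projDir_add_smul] at hlo hhi
  constructor <;> linarith

lemma projDir_mem_Ioo (hPo : IsOpen P) (hPb : Bornology.IsBounded P) {p : ℝ × ℝ} (hp : p ∈ P) :
    projDir θ p ∈ Ioo (stripXi θ P) (stripEta θ P) := by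
  obtain ⟨ε, hε, hball⟩ := Metric.isOpen_iff.1 hPo p hp
  have h := projDir_mem_Icc_of_ball_subset (θ := θ) hPb hε hball
  constructor <;> linarith [h.1, h.2]

lemma stripD_eq (hPo : IsOpen P) (hPb : Bornology.IsBounded P) {p q : ℝ × ℝ} (hp : p ∈ P)
    (hq : q ∈ P) :
    stripD θ P p q = |stripCoord (stripXi θ P) (stripEta θ P) (projDir θ q) -
      stripCoord (stripXi θ P) (stripEta θ P) (projDir θ p)| := by
  rw [stripD, log_crossRatio_eq_stripCoord_sub (projDir_mem_Ioo hPo hPb hp)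
    (projDir_mem_Ioo hPo hPb hq)]

lemma stripD_le_of_ball_subset (hPo : IsOpen P) (hPb : Bornology.IsBounded P) {p q : ℝ × ℝ}
    {ε : ℝ} (hε : 0 < ε) (hp : Metric.ball p ε ⊆ P) (hq : Metric.ball q ε ⊆ P) :
    stripD θ P p q ≤ 8 * dist q p / ε := by
  rw [stripD_eq hPo hPb (hp (Metric.mem_ball_self hε)) (hq (Metric.mem_ball_self hε))]
  calc _ ≤ 2 * |projDir θ q - projDir θ p| / (ε / 2) :=
        abs_stripCoord_sub_le (half_pos hε) (projDir_mem_Icc_of_ball_subset hPb hε hp)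
          (projDir_mem_Icc_of_ball_subset hPb hε hq)
    _ ≤ 2 * (2 * dist q p) / (ε / 2) := by
        gcongr
        simpa [← Real.dist_eq] using (lipschitzWith_projDir θ).dist_le_mul q p
    _ = 8 * dist q p / ε := by field_simp; ring

variable {ι : Type*} {l : Filter ι} {x : ℝ × ℝ} {y : ι → ℝ × ℝ}

lemma tendsto_stripD_atTop_of_tendsto_stripXi (hPo : IsOpen P) (hPb : Bornology.IsBounded P)
    (hx : x ∈ P) (hyP : ∀ n, y n ∈ P)
    (hy : Tendsto (fun n => projDir θ (y n)) l (𝓝 (stripXi θ P))) :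
    Tendsto (fun n => stripD θ P x (y n)) l atTop := by
  have hx' := projDir_mem_Ioo (θ := θ) hPo hPb hx
  have hy' : Tendsto (fun n => projDir θ (y n)) l (𝓝[>] stripXi θ P) :=
    tendsto_nhdsWithin_iff.2 ⟨hy, .of_forall fun n => (projDir_mem_Ioo hPo hPb (hyP n)).1⟩
  refine (tendsto_abs_atBot_atTop.comp (tendsto_atBot_add_const_right _
    (-stripCoord (stripXi θ P) (stripEta θ P) (projDir θ x))
    ((tendsto_stripCoord_nhdsGT (hx'.1.trans hx'.2)).comp hy'))).congr fun n => ?_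
  rw [stripD_eq hPo hPb hx (hyP n), sub_eq_add_neg]
  rfl

lemma tendsto_stripD_atTop_of_tendsto_stripEta (hPo : IsOpen P) (hPb : Bornology.IsBounded P)
    (hx : x ∈ P) (hyP : ∀ n, y n ∈ P)
    (hy : Tendsto (fun n => projDir θ (y n)) l (𝓝 (stripEta θ P))) :
    Tendsto (fun n => stripD θ P x (y n)) l atTop := by
  have hx' := projDir_mem_Ioo (θ := θ) hPo hPb hx
  have hy' : Tendsto (fun n => projDir θ (y n)) l (𝓝[<] stripEta θ P) :=
    tendsto_nhdsWithin_iff.2 ⟨hy, .of_forall fun n => (projDir_mem_Ioo hPo hPb (hyP n)).2⟩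
  refine (tendsto_abs_atTop_atTop.comp (tendsto_atTop_add_const_right _
    (-stripCoord (stripXi θ P) (stripEta θ P) (projDir θ x))
    ((tendsto_stripCoord_nhdsLT (hx'.1.trans hx'.2)).comp hy'))).congr fun n => ?_
  rw [stripD_eq hPo hPb hx (hyP n), sub_eq_add_neg]
  rfl

end Strip

lemma summable_mul_stripD {P : Set (ℝ × ℝ)} {ι : Type*} {θ w : ι → ℝ} (hw : ∀ i, 0 ≤ w i)
    (hsum : Summable w) (hPo : IsOpen P) (hPb : Bornology.IsBounded P) {p q : ℝ × ℝ}
    (hp : p ∈ P) (hq : q ∈ P) :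
    Summable fun i => w i * stripD (θ i) P p q := by
  obtain ⟨εp, hεp, hballp⟩ := Metric.isOpen_iff.1 hPo p hp
  obtain ⟨εq, hεq, hballq⟩ := Metric.isOpen_iff.1 hPo q hq
  have hε : 0 < min εp εq := lt_min hεp hεq
  refine (hsum.mul_right (8 * dist q p / min εp εq)).of_nonneg_of_le
    (fun i => mul_nonneg (hw i) (abs_nonneg _)) fun i => mul_le_mul_of_nonneg_left ?_ (hw i)
  exact stripD_le_of_ball_subset hPo hPb hε
    ((Metric.ball_subset_ball (min_le_left _ _)).trans hballp)
    ((Metric.ball_subset_ball (min_le_right _ _)).trans hballq)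

theorem stmt_15_general (P : Set (ℝ × ℝ)) (hPo : IsOpen P) (hPb : Bornology.IsBounded P)
    (θi : ℕ → ℝ) (w : ℕ → ℝ) (hw : ∀ i, 0 < w i) (hsum : Summable w)
    (v : ℝ × ℝ) (A B : ℝ × ℝ)
    (hv : v ∈ openSegment ℝ A B)
    -- Θ contains the direction normal to the side through `v`: for some `i`,
    -- the side lies on a supporting line of the strip in direction `θi i`.
    (hi : ∃ i, projDir (θi i) A = projDir (θi i) B ∧
      (projDir (θi i) A = stripXi (θi i) P ∨ projDir (θi i) A = stripEta (θi i) P))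
    (x : ℝ × ℝ) (hx : x ∈ P)
    (y : ℕ → ℝ × ℝ) (hyP : ∀ n, y n ∈ P)
    (hyl : Filter.Tendsto y Filter.atTop (nhds v)) :
    Filter.Tendsto (fun n => ∑' i, w i * stripD (θi i) P x (y n))
      Filter.atTop Filter.atTop := by
  obtain ⟨i, hAB, hsupport⟩ := hi
  have hproj : Tendsto (fun n => projDir (θi i) (y n)) atTop (𝓝 (projDir (θi i) A)) := by
    rw [← projDir_eq_of_mem_segment (openSegment_subset_segment ℝ A B hv) hAB]
    exact ((lipschitzWith_projDir _).continuous.tendsto v).comp hyl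
  have hterm : Tendsto (fun n => stripD (θi i) P x (y n)) atTop atTop := by
    rcases hsupport with h | h <;> rw [h] at hproj
    · exact tendsto_stripD_atTop_of_tendsto_stripXi hPo hPb hx hyP hproj
    · exact tendsto_stripD_atTop_of_tendsto_stripEta hPo hPb hx hyP hproj
  refine tendsto_atTop_mono (fun n => ?_) (hterm.const_mul_atTop (hw i))
  exact (summable_mul_stripD (fun j => (hw j).le) hsum hPo hPb hx (hyP n)).le_tsum i
    fun j _ => mul_nonneg (hw j).le (abs_nonneg _)

theorem stmt_15 (P : Set (ℝ × ℝ)) (hPo : IsOpen P) (hPb : Bornology.IsBounded P)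
    (hPconv : Convex ℝ P) (hPne : P.Nonempty)
    (θi : ℕ → ℝ) (w : ℕ → ℝ) (hw : ∀ i, 0 < w i) (hsum : Summable w)
    (v : ℝ × ℝ) (A B : ℝ × ℝ) (hAB : A ≠ B)
    (hside : segment ℝ A B ⊆ frontier P) (hv : v ∈ openSegment ℝ A B)
    -- Θ contains the direction normal to the side through `v`: for some `i`,
    -- the side lies on a supporting line of the strip in direction `θi i`.
    (hi : ∃ i, projDir (θi i) A = projDir (θi i) B ∧
      (projDir (θi i) A = stripXi (θi i) P ∨ projDir (θi i) A = stripEta (θi i) P))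
    (x : ℝ × ℝ) (hx : x ∈ P)
    (y : ℕ → ℝ × ℝ) (hyP : ∀ n, y n ∈ P) (hyseg : ∀ n, y n ∈ segment ℝ x v)
    (hyl : Filter.Tendsto y Filter.atTop (nhds v)) :
    Filter.Tendsto (fun n => ∑' i, w i * stripD (θi i) P x (y n))
      Filter.atTop Filter.atTop :=
  stmt_15_general P hPo hPb θi w hw hsum v A B hv hi x hx y hyP hyl
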